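/- Let R be a commutative ring and A an n×n skew-symmetric matrix over R (Aᵀ = −A). Let u be an index with v = u+1 also an index, suppose A_{uv} = 0, and suppose moreover that rows u and v agree off the pair {u,v}, i.e. A_{wu} = A_{wv} for every index w ∉ {u,v}. Let A⁺ be the matrix obtained from A by setting the (u,v) entry to 1 and the (v,u) entry to −1, and let A₀ be the matrix obtained from A by deleting rows and columns u and v. Then charpoly(A⁺) = charpoly(A₀) + charpoly(A). -/

import Mathlib

open Polynomial Matrix

/-!
Write `M = X • 1 - A`, so that `X • 1 - A⁺ = M + E_vu - E_uv`. Expanding the determinant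
multilinearly in columns `u` and `v` gives
`det M + adj(M)_uv - adj(M)_vu + det M₀` with `M₀ = X • 1 - A₀`,
the last term because columns `u, v` replaced by `e_v, e_u` leave, after swapping them, a
block-triangular matrix with diagonal blocks `M₀` and `1`. When `u` and `v` have the same
neighbours, conjugating `M` by the transposition `(u v)` only exchanges the diagonal entries
`M_uu` and `M_vv`, which the cofactor `adj(M)_uv` does not see; hence `adj(M)_uv = adj(M)_vu`.
-/

namespace Matrix

variable {n S : Type*} [Fintype n] [DecidableEq n] [CommRing S]

theorem det_updateCol_single_eq_adjugate (M : Matrix n n S) (i j : n) :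
    (M.updateCol j (Pi.single i 1)).det = adjugate M j i := by
  rw [← det_transpose, ← updateRow_transpose, ← adjugate_apply, ← adjugate_transpose,
    transpose_apply]

theorem det_eq_det_submatrix_of_col_eq_one (M : Matrix n n S) (p : n → Prop) [DecidablePred p]
    (h : ∀ i j, ¬p j → M i j = (1 : Matrix n n S) i j) :
    M.det = (M.submatrix ((↑) : {i // p i} → n) (↑)).det := by
  have hblocks : M.submatrix (Equiv.sumCompl p) (Equiv.sumCompl p) =
      fromBlocks (M.submatrix (↑) (↑)) 0 (M.submatrix (↑) (↑)) 1 := by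
    ext (i | i) (j | j)
    · rfl
    · exact (h _ _ j.2).trans (one_apply_ne fun hij => j.2 (hij ▸ i.2))
    · rfl
    · simp [h _ _ j.2, one_apply, Subtype.ext_iff]
  rw [← det_submatrix_equiv_self (Equiv.sumCompl p), hblocks, det_fromBlocks_zero₁₂, det_one,
    mul_one]

theorem det_updateCol_single_self_updateCol_single_self (M : Matrix n n S) (u v : n) :
    ((M.updateCol u (Pi.single u 1)).updateCol v (Pi.single v 1)).det =
      (M.submatrix ((↑) : {i // i ≠ u ∧ i ≠ v} → n) (↑)).det := by
  rw [det_eq_det_submatrix_of_col_eq_one _ (fun i => i ≠ u ∧ i ≠ v)]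
  · congr 1
    ext i j
    simp [j.2.1, j.2.2]
  · intro i j hj
    by_cases hjv : j = v
    · subst hjv; simp [one_apply, Pi.single_apply]
    · have hju : j = u := by tauto
      subst hju; simp [one_apply, Pi.single_apply, hjv]

theorem det_updateCol_single_updateCol_single (M : Matrix n n S) {u v : n} (huv : u ≠ v) :
    ((M.updateCol v (Pi.single u 1)).updateCol u (Pi.single v 1)).det =
      -(M.submatrix ((↑) : {i // i ≠ u ∧ i ≠ v} → n) (↑)).det := by
  have hswap : (M.updateCol v (Pi.single u 1)).updateCol u (Pi.single v 1) =
      ((M.updateCol u (Pi.single u 1)).updateCol v (Pi.single v 1)).submatrix id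
        (Equiv.swap u v) := by
    ext i j
    rcases eq_or_ne j u with rfl | hju
    · simp
    rcases eq_or_ne j v with rfl | hjv
    · simp [updateCol_ne hju, updateCol_ne huv]
    · simp [Equiv.swap_apply_of_ne_of_ne hju hjv, hju, hjv]
  rw [hswap, det_permute', Equiv.Perm.sign_swap huv,
    det_updateCol_single_self_updateCol_single_self]
  simp

theorem det_add_single_sub_single (M : Matrix n n S) {u v : n} (huv : u ≠ v) :
    (M + single v u 1 - single u v 1).det =
      M.det + adjugate M u v - adjugate M v u +
        (M.submatrix ((↑) : {i // i ≠ u ∧ i ≠ v} → n) (↑)).det := by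
  have hcols : M + single v u 1 - single u v 1 =
      (M.updateCol u ((fun k => M k u) + Pi.single v 1)).updateCol v
        ((fun k => M k v) + (-1 : S) • Pi.single u 1) := by
    ext k l
    simp only [sub_apply, add_apply, single_apply, updateCol_apply, Pi.add_apply, Pi.smul_apply,
      Pi.single_apply, smul_eq_mul]
    split_ifs <;> grind
  have hV : (M.updateCol u ((fun k => M k u) + Pi.single v 1)).updateCol v (fun k => M k v) =
      M.updateCol u ((fun k => M k u) + Pi.single v 1) := by
    rw [updateCol_comm _ huv, updateCol_eq_self]
  have hU : (M.updateCol v (Pi.single u 1)).updateCol u (fun k => M k u) =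
      M.updateCol v (Pi.single u 1) := by
    rw [← updateCol_comm _ huv, updateCol_eq_self]
  rw [hcols, det_updateCol_add, det_updateCol_smul, hV, det_updateCol_add, updateCol_eq_self,
    updateCol_comm _ huv, det_updateCol_add, hU, det_updateCol_single_updateCol_single _ huv,
    det_updateCol_single_eq_adjugate, det_updateCol_single_eq_adjugate]
  ring

theorem adjugate_apply_congr {M N : Matrix n n S} {i j : n}
    (h : ∀ k l, k ≠ j → l ≠ i → M k l = N k l) : adjugate M i j = adjugate N i j := by
  rw [adjugate_apply, adjugate_apply]
  set M₁ := M.updateRow j (Pi.single i 1)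
  set N₁ := N.updateRow j (Pi.single i 1)
  have hN₁ : N₁ = M₁.updateCol i ((fun k => M₁ k i) + fun k => N₁ k i - M₁ k i) := by
    ext k l
    rcases eq_or_ne l i with rfl | hl
    · simp
    rcases eq_or_ne k j with rfl | hk
    · simp [M₁, N₁, hl]
    · simp [M₁, N₁, hl, hk, h k l hk hl]
  have hzero : (M₁.updateCol i fun k => N₁ k i - M₁ k i).det = 0 := by
    refine det_eq_zero_of_row_eq_zero j fun l => ?_
    rcases eq_or_ne l i with rfl | hl
    · simp [M₁, N₁]
    · simp [M₁, hl]
  rw [hN₁, det_updateCol_add, updateCol_eq_self, hzero, add_zero]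

theorem adjugate_apply_comm_of_twins {M : Matrix n n S} {u v : n} (hM : M u v = M v u)
    (hrow : ∀ k, k ≠ u → k ≠ v → M u k = M v k)
    (hcol : ∀ k, k ≠ u → k ≠ v → M k u = M k v) :
    adjugate M u v = adjugate M v u := by
  calc adjugate M u v = adjugate (M.submatrix (Equiv.swap u v) (Equiv.swap u v)) u v := by
        refine adjugate_apply_congr fun k l hk hl => ?_
        rcases eq_or_ne k u with rfl | hku <;> rcases eq_or_ne l v with rfl | hlv
        · simp [hM]
        · simp [Equiv.swap_apply_of_ne_of_ne hl hlv, hrow l hl hlv]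
        · simp [Equiv.swap_apply_of_ne_of_ne hku hk, hcol k hku hk]
        · simp [Equiv.swap_apply_of_ne_of_ne hku hk, Equiv.swap_apply_of_ne_of_ne hl hlv]
    _ = adjugate M v u := by simp

theorem charmatrix_submatrix {m : Type*} [Fintype m] [DecidableEq m] (A : Matrix n n S)
    {e : m → n} (he : Function.Injective e) :
    charmatrix (A.submatrix e e) = (charmatrix A).submatrix e e := by
  ext i j
  rcases eq_or_ne i j with rfl | hij
  · simp [charmatrix_apply_eq]
  · simp [charmatrix_apply_ne _ _ _ hij, charmatrix_apply_ne _ _ _ (he.ne hij)]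

end Matrix

/-- the "adding an edge" corollary when the two consecutive vertices
have the same neighbours. -/
theorem charpoly_add_edge_same_neighbours {R : Type*} [CommRing R] {n : ℕ}
    (A : Matrix (Fin n) (Fin n) R) (hskew : Aᵀ = -A)
    (u v : Fin n) (huv : (v : ℕ) = (u : ℕ) + 1) (h0 : A u v = 0)
    (hsame : ∀ w : Fin n, w ≠ u → w ≠ v → A w u = A w v) :
    (Matrix.of (fun i j : Fin n =>
        if i = u ∧ j = v then 1 else if i = v ∧ j = u then -1 else A i j)).charpoly
      = (A.submatrix (fun i : {i : Fin n // i ≠ u ∧ i ≠ v} => (i : Fin n))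
          (fun j : {i : Fin n // i ≠ u ∧ i ≠ v} => (j : Fin n))).charpoly
        + A.charpoly := by
  have hne : u ≠ v := fun h => by simp [h] at huv
  have hskew_apply : ∀ i j, A j i = -A i j := fun i j => by simpa using congrFun (congrFun hskew i) j
  have hvu : A v u = 0 := by rw [hskew_apply, h0, neg_zero]
  have hplus : charmatrix (of fun i j =>
      if i = u ∧ j = v then 1 else if i = v ∧ j = u then -1 else A i j) =
      charmatrix A + single v u 1 - single u v 1 := by
    refine Matrix.ext fun i j => ?_
    simp only [charmatrix_apply, diagonal_apply, of_apply, Matrix.sub_apply, Matrix.add_apply,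
      single_apply]
    split_ifs <;> grind
  have htwins : adjugate (charmatrix A) u v = adjugate (charmatrix A) v u := by
    refine adjugate_apply_comm_of_twins ?_ (fun k hku hkv => ?_) (fun k hku hkv => ?_)
    · rw [charmatrix_apply_ne _ _ _ hne, charmatrix_apply_ne _ _ _ hne.symm, h0, hvu]
    · rw [charmatrix_apply_ne _ _ _ hku.symm, charmatrix_apply_ne _ _ _ hkv.symm, hskew_apply k u, hskew_apply k v,
        hsame k hku hkv]
    · rw [charmatrix_apply_ne _ _ _ hku, charmatrix_apply_ne _ _ _ hkv, hsame k hku hkv]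
  rw [charpoly, hplus, det_add_single_sub_single _ hne, htwins,
    ← charmatrix_submatrix _ Subtype.val_injective, add_sub_cancel_right]
  exact add_comm _ _
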